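/- Let β = (1+√5)/2 and T_β(x) = βx mod 1. Suppose g is a pdf on [0,1], continuous on [0,1], differentiable on (0,1), with ‖g′‖_∞ < ∞. Then there exists a constant C (independent of g and n) such that ‖g_n − f_β‖_∞ ≤ C β^{−2n/3} (‖g′‖_∞ + 1) for all n, where g_n is the pdf of T_β^n(X) for X with pdf g and f_β is the T_β-invariant density. -/

import Mathlib

open MeasureTheory Real Filter

/-- The golden ratio. -/
noncomputable def gr : ℝ := (1 + Real.sqrt 5) / 2

/-- Binary strings of length `n` with no two consecutive ones. -/
def Omega (n : ℕ) : Finset (Fin n → Fin 2) :=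
  Finset.univ.filter fun J =>
    ∀ k : Fin n, ∀ h : k.val + 1 < n, (J k : ℕ) * (J ⟨k.val + 1, h⟩ : ℕ) = 0

/-- `L (j_1,…,j_n) = ∑ j_k β^{-k}`. -/
noncomputable def L {n : ℕ} (J : Fin n → Fin 2) : ℝ :=
  ∑ k : Fin n, ((J k : ℕ) : ℝ) * gr ^ (-(k.val + 1 : ℤ))

/-- The last digit `j_n` of a string. -/
def lastD {n : ℕ} (J : Fin n → Fin 2) : ℕ :=
  if h : 0 < n then (J ⟨n - 1, Nat.sub_lt h one_pos⟩ : ℕ) else 0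

/-- The length of `I_{n,J}`. -/
noncomputable def Ilen {n : ℕ} (J : Fin n → Fin 2) : ℝ :=
  (lastD J : ℝ) * gr ^ (-(n + 1 : ℤ)) + (1 - (lastD J : ℝ)) * gr ^ (-(n : ℤ))

/-- The interval `I_{n,J}`. -/
noncomputable def Ival {n : ℕ} (J : Fin n → Fin 2) : Set ℝ :=
  Set.Ico (L J) (L J + Ilen J)

/-- The base-β transformation (β = golden ratio). -/
noncomputable def T (x : ℝ) : ℝ := gr * x - ⌊gr * x⌋

/-- The invariant density. -/
noncomputable def fGold (x : ℝ) : ℝ :=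
  if x < gr⁻¹ then (1 + gr) / Real.sqrt 5 else gr / Real.sqrt 5

/-- The pdf of `T^n X` when `X` has pdf `f`. -/
noncomputable def evolve (n : ℕ) (f : ℝ → ℝ) (x : ℝ) : ℝ :=
  if x < gr⁻¹ then ∑ J ∈ Omega n, gr ^ (-(n : ℤ)) * f (L J + x * gr ^ (-(n : ℤ)))
  else ∑ J ∈ (Omega n).filter (fun J => lastD J = 0),
    gr ^ (-(n : ℤ)) * f (L J + x * gr ^ (-(n : ℤ)))

-- §1 basics
lemma s5sq : Real.sqrt 5 ^ 2 = 5 := Real.sq_sqrt (by norm_num)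
lemma s5_gt : 2 < Real.sqrt 5 := by nlinarith [Real.sqrt_nonneg 5, s5sq]
lemma s5_lt : Real.sqrt 5 < 3 := by nlinarith [Real.sqrt_nonneg 5, s5sq]
lemma gr_gt_one : 1 < gr := by unfold gr; nlinarith [s5_gt]
lemma gr_lt_two : gr < 2 := by unfold gr; nlinarith [s5_lt]
lemma gr_pos : 0 < gr := lt_trans one_pos gr_gt_one
lemma gr_ne : gr ≠ 0 := ne_of_gt gr_pos
lemma gr_sq : gr ^ 2 = gr + 1 := by unfold gr; nlinarith [s5sq]
lemma q_pos : 0 < gr⁻¹ := inv_pos.mpr gr_pos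
lemma q_nonneg : 0 ≤ gr⁻¹ := le_of_lt q_pos
lemma q_lt_one : gr⁻¹ < 1 := inv_lt_one_of_one_lt₀ gr_gt_one
lemma q_le_one : gr⁻¹ ≤ 1 := le_of_lt q_lt_one
lemma gr_mul_q : gr * gr⁻¹ = 1 := mul_inv_cancel₀ gr_ne
lemma q_eq : gr⁻¹ = gr - 1 := by
  have h : gr * (gr - 1) = 1 := by nlinarith [gr_sq]
  exact inv_eq_of_mul_eq_one_right h
lemma q_sum : gr⁻¹ + gr⁻¹ ^ 2 = 1 := by
  rw [q_eq]; linear_combination gr_sq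
lemma q_lt_23 : gr⁻¹ < 2/3 := by
  rw [q_eq]; unfold gr; nlinarith [s5sq, Real.sqrt_nonneg 5]
lemma gr_add_q : gr + gr⁻¹ = Real.sqrt 5 := by
  rw [q_eq]; unfold gr; ring
lemma q_pow_pos (k : ℕ) : 0 < gr⁻¹ ^ k := pow_pos q_pos k
lemma q_pow_le_one (k : ℕ) : gr⁻¹ ^ k ≤ 1 := pow_le_one₀ q_nonneg q_le_one
lemma q_pow_split (k : ℕ) : gr⁻¹ ^ (k+1) + gr⁻¹ ^ (k+2) = gr⁻¹ ^ k := by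
  calc gr⁻¹ ^ (k+1) + gr⁻¹ ^ (k+2) = gr⁻¹ ^ k * (gr⁻¹ + gr⁻¹ ^ 2) := by ring
  _ = gr⁻¹ ^ k := by rw [q_sum, mul_one]
lemma q_pow_anti {a b : ℕ} (h : a ≤ b) : gr⁻¹ ^ b ≤ gr⁻¹ ^ a :=
  pow_le_pow_of_le_one q_nonneg q_le_one h
lemma zpow_neg_nat (k : ℕ) : gr ^ (-(k : ℤ)) = gr⁻¹ ^ k := by
  rw [zpow_neg, zpow_natCast, inv_pow]

lemma L_q {n : ℕ} (J : Fin n → Fin 2) :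
    L J = ∑ k : Fin n, ((J k : ℕ) : ℝ) * gr⁻¹ ^ (k.val + 1) := by
  unfold L
  refine Finset.sum_congr rfl fun k _ => ?_
  have : (-(k.val + 1 : ℤ)) = -((k.val + 1 : ℕ) : ℤ) := by push_cast; ring
  rw [this, zpow_neg_nat]

lemma L_nonneg {n : ℕ} (J : Fin n → Fin 2) : 0 ≤ L J := by
  rw [L_q]
  exact Finset.sum_nonneg fun k _ => mul_nonneg (Nat.cast_nonneg _) (le_of_lt (q_pow_pos _))

-- §2 combinatorics
lemma mem_Omega {n : ℕ} {J : Fin n → Fin 2} :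
    J ∈ Omega n ↔ ∀ k : Fin n, ∀ h : k.val + 1 < n, (J k : ℕ) * (J ⟨k.val + 1, h⟩ : ℕ) = 0 := by
  simp [Omega]

lemma mem_Omega' {n : ℕ} {J : Fin n → Fin 2} :
    J ∈ Omega n ↔ ∀ i : ℕ, ∀ h1 : i < n, ∀ h2 : i + 1 < n,
      (J ⟨i, h1⟩ : ℕ) * (J ⟨i + 1, h2⟩ : ℕ) = 0 := by
  rw [mem_Omega]
  constructor
  · intro H i h1 h2; exact H ⟨i, h1⟩ h2
  · intro H k h; exact H k.val k.isLt h

lemma lastD_zero (J : Fin 0 → Fin 2) : lastD J = 0 := by simp [lastD]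

lemma lastD_succ {n : ℕ} (J : Fin (n+1) → Fin 2) : lastD J = (J (Fin.last n) : ℕ) := by
  simp [lastD, Fin.last]

lemma lastD_le {n : ℕ} (J : Fin n → Fin 2) : lastD J ≤ 1 := by
  unfold lastD
  split
  · exact Nat.lt_succ_iff.mp (Fin.is_lt _)
  · exact Nat.zero_le 1

lemma lastD_succ' {p : ℕ} (K : Fin (p+1) → Fin 2) :
    lastD K = (K ⟨p, Nat.lt_succ_self p⟩ : ℕ) := by
  rw [lastD_succ]; rfl

lemma snoc_at {n : ℕ} (K : Fin n → Fin 2) (d : Fin 2) (i : ℕ) (h : i < n + 1) :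
    (Fin.snoc K d : Fin (n+1) → Fin 2) ⟨i, h⟩ = if hi : i < n then K ⟨i, hi⟩ else d := by
  split
  · next hi =>
    have e : (⟨i, h⟩ : Fin (n+1)) = Fin.castSucc ⟨i, hi⟩ := rfl
    rw [e, Fin.snoc_castSucc]
  · next hi =>
    have e : i = n := by omega
    subst e
    have e2 : (⟨i, h⟩ : Fin (i+1)) = Fin.last i := rfl
    rw [e2, Fin.snoc_last]

lemma lastD_snoc {n : ℕ} (K : Fin n → Fin 2) (d : Fin 2) :
    lastD (Fin.snoc K d) = (d : ℕ) := by
  rw [lastD_succ, Fin.snoc_last]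

lemma snoc_mem_iff {n : ℕ} {K : Fin n → Fin 2} {d : Fin 2} :
    Fin.snoc K d ∈ Omega (n+1) ↔ K ∈ Omega n ∧ lastD K * (d : ℕ) = 0 := by
  rw [mem_Omega', mem_Omega']
  constructor
  · intro H
    constructor
    · intro i h1 h2
      have hh := H i (by omega) (by omega)
      rwa [snoc_at K d i (by omega), dif_pos h1, snoc_at K d (i+1) (by omega), dif_pos h2] at hh
    · cases n with
      | zero => simp [lastD_zero]
      | succ p =>
        have hh := H p (by omega) (by omega)
        rw [snoc_at K d p (by omega), snoc_at K d (p+1) (by omega)] at hh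
        rw [dif_pos (by omega : p < p + 1), dif_neg (by omega : ¬ (p + 1 < p + 1))] at hh
        rw [lastD_succ']
        exact hh
  · rintro ⟨H1, H2⟩ i h1 h2
    rw [snoc_at K d i (by omega), snoc_at K d (i+1) (by omega)]
    by_cases hc : i + 1 < n
    · rw [dif_pos (by omega), dif_pos hc]
      exact H1 i (by omega) hc
    · have hi : i + 1 = n := by omega
      rw [dif_pos (by omega : i < n), dif_neg (by omega)]
      cases n with
      | zero => omega
      | succ p =>
        have hip : i = p := by omega
        subst hip
        rw [lastD_succ'] at H2
        exact H2

-- §3 snoc sums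
lemma L_snoc {n : ℕ} (K : Fin n → Fin 2) (d : Fin 2) :
    L (Fin.snoc K d) = L K + (d : ℕ) * gr⁻¹ ^ (n+1) := by
  rw [L_q, L_q, Fin.sum_univ_castSucc]
  congr 1
  · refine Finset.sum_congr rfl fun k _ => ?_
    rw [Fin.snoc_castSucc]
    simp
  · rw [Fin.snoc_last]
    simp

lemma sum_omega_succ {n : ℕ} (f : (Fin (n+1) → Fin 2) → ℝ) :
    ∑ J ∈ Omega (n+1), f J =
      ∑ K ∈ Omega n, (f (Fin.snoc K 0) + if lastD K = 0 then f (Fin.snoc K 1) else 0) := by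
  have key : ∑ J ∈ Omega (n+1), f J
      = ∑ p ∈ (Omega n ×ˢ (Finset.univ : Finset (Fin 2))).filter
          (fun p => lastD p.1 * (p.2 : ℕ) = 0), f (Fin.snoc p.1 p.2) := by
    refine Finset.sum_nbij' (fun J => (Fin.init J, J (Fin.last n)))
      (fun p => Fin.snoc p.1 p.2) ?_ ?_ ?_ ?_ ?_
    · intro J hJ
      rw [Finset.mem_filter, Finset.mem_product]
      have hJ' : Fin.snoc (Fin.init J) (J (Fin.last n)) ∈ Omega (n+1) := by
        rw [Fin.snoc_init_self]; exact hJ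
      rw [snoc_mem_iff] at hJ'
      exact ⟨⟨hJ'.1, Finset.mem_univ _⟩, hJ'.2⟩
    · intro p hp
      rw [Finset.mem_filter, Finset.mem_product] at hp
      exact snoc_mem_iff.mpr ⟨hp.1.1, hp.2⟩
    · intro J _; exact Fin.snoc_init_self J
    · intro p _
      ext
      · simp [Fin.init_snoc]
      · simp [Fin.snoc_last]
    · intro J _
      rw [Fin.snoc_init_self]
  rw [key, Finset.sum_filter, Finset.sum_product]
  refine Finset.sum_congr rfl fun K _ => ?_
  rw [Fin.sum_univ_two]
  simp

lemma sum_omega_succ_filter {n : ℕ} (f : (Fin (n+1) → Fin 2) → ℝ) :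
    ∑ J ∈ (Omega (n+1)).filter (fun J => lastD J = 0), f J
      = ∑ K ∈ Omega n, f (Fin.snoc K 0) := by
  rw [Finset.sum_filter, sum_omega_succ (fun J => if lastD J = 0 then f J else 0)]
  refine Finset.sum_congr rfl fun K _ => ?_
  simp [lastD_snoc]

-- §4 cylinder geometry
lemma omega_zero : Omega 0 = {(fun k => k.elim0 : Fin 0 → Fin 2)} := by
  ext J
  simp only [Omega, Finset.mem_filter, Finset.mem_univ, true_and, Finset.mem_singleton]
  constructor
  · intro _; exact Subsingleton.elim _ _
  · intro _ k; exact k.elim0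

lemma L_empty (J : Fin 0 → Fin 2) : L J = 0 := by simp [L]

lemma cyl_le_one : ∀ {n : ℕ} (J : Fin n → Fin 2), J ∈ Omega n →
    L J + gr⁻¹ ^ (n + lastD J) ≤ 1 := by
  intro n
  induction n with
  | zero =>
    intro J _
    rw [L_empty, lastD_zero]
    norm_num
  | succ p ih =>
    intro J hJ
    have hrep : J = Fin.snoc (Fin.init J) (J (Fin.last p)) := (Fin.snoc_init_self J).symm
    rw [hrep] at hJ ⊢
    set K := Fin.init J with hK
    set d := J (Fin.last p) with hd
    obtain ⟨hKmem, hlast⟩ := snoc_mem_iff.mp hJ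
    rw [L_snoc, lastD_snoc]
    have hIH := ih K hKmem
    have hd2 : (d : ℕ) < 2 := d.isLt
    interval_cases hdv : (d : ℕ)
    · -- d = 0
      simp only [Nat.cast_zero, zero_mul, add_zero, Nat.add_zero]
      have : gr⁻¹ ^ (p + 1) ≤ gr⁻¹ ^ (p + lastD K) := q_pow_anti (by have := lastD_le K; omega)
      linarith
    · -- d = 1
      have hK0 : lastD K = 0 := by omega
      rw [hK0] at hIH
      simp only [Nat.cast_one, one_mul]
      have : L K + ((gr⁻¹ ^ (p+1) + gr⁻¹ ^ (p+2)) : ℝ) ≤ 1 := by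
        rw [q_pow_split]
        simpa using hIH
      linarith [this]

lemma sum_len : ∀ n : ℕ, ∑ J ∈ Omega n, gr⁻¹ ^ (n + lastD J) = 1 := by
  intro n
  induction n with
  | zero =>
    rw [omega_zero, Finset.sum_singleton, lastD_zero]
    norm_num
  | succ p ih =>
    rw [sum_omega_succ (fun J => gr⁻¹ ^ (p + 1 + lastD J))]
    rw [← ih]
    refine Finset.sum_congr rfl fun K _ => ?_
    rw [lastD_snoc, lastD_snoc]
    by_cases h : lastD K = 0
    · rw [if_pos h, h]
      simp only [Fin.val_zero, Fin.val_one]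
      have e : p + 1 + 0 = p + 1 := rfl
      have e2 : p + 1 + 1 = p + 2 := rfl
      rw [e, e2, q_pow_split]
      norm_num
    · have h1 : lastD K = 1 := by have := lastD_le K; omega
      rw [if_neg h, h1]
      norm_num

lemma sum_qn (n : ℕ) : ∑ J ∈ Omega n, gr⁻¹ ^ n ≤ gr := by
  have h1 : ∑ J ∈ Omega n, gr⁻¹ ^ n ≤ ∑ J ∈ Omega n, gr * gr⁻¹ ^ (n + lastD J) := by
    refine Finset.sum_le_sum fun J _ => ?_
    have h2 : gr⁻¹ ^ (n + 1) ≤ gr⁻¹ ^ (n + lastD J) := q_pow_anti (by have := lastD_le J; omega)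
    have h3 : gr⁻¹ ^ n = gr * gr⁻¹ ^ (n + 1) := by
      rw [pow_succ, ← mul_assoc, mul_comm gr, mul_assoc, gr_mul_q, mul_one]
    rw [h3]
    exact mul_le_mul_of_nonneg_left h2 (le_of_lt gr_pos)
  rw [← Finset.mul_sum, sum_len n, mul_one] at h1
  exact h1

-- §5 integral partition
lemma intble {g : ℝ → ℝ} (hg : ContinuousOn g (Set.Icc 0 1)) {a b : ℝ}
    (h0 : 0 ≤ a) (hab : a ≤ b) (h1 : b ≤ 1) : IntervalIntegrable g volume a b := by
  refine ContinuousOn.intervalIntegrable (hg.mono ?_)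
  rw [Set.uIcc_of_le hab]
  exact Set.Icc_subset_Icc h0 h1

lemma sum_integral {g : ℝ → ℝ} (hg : ContinuousOn g (Set.Icc 0 1)) :
    ∀ n : ℕ, ∑ J ∈ Omega n, ∫ x in (L J)..(L J + gr⁻¹ ^ (n + lastD J)), g x
      = ∫ x in (0:ℝ)..1, g x := by
  intro n
  induction n with
  | zero =>
    rw [omega_zero, Finset.sum_singleton, lastD_zero, L_empty]
    norm_num
  | succ p ih =>
    rw [sum_omega_succ (fun J => ∫ x in (L J)..(L J + gr⁻¹ ^ (p + 1 + lastD J)), g x), ← ih]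
    refine Finset.sum_congr rfl fun K hK => ?_
    have h0 : 0 ≤ L K := L_nonneg K
    have hc : L K + gr⁻¹ ^ (p + lastD K) ≤ 1 := cyl_le_one K hK
    by_cases h : lastD K = 0
    · rw [if_pos h]
      simp only [L_snoc, lastD_snoc, Fin.val_zero, Fin.val_one, Nat.cast_zero, Nat.cast_one,
        zero_mul, add_zero, one_mul]
      have hc0 : L K + gr⁻¹ ^ p ≤ 1 := by rw [h] at hc; simpa using hc
      have key : (L K + gr⁻¹ ^ (p+1)) + gr⁻¹ ^ (p + 1 + 1) = L K + gr⁻¹ ^ p := by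
        have := q_pow_split p
        have e : p + 1 + 1 = p + 2 := rfl
        rw [e]; linarith
      have i1 : IntervalIntegrable g volume (L K) (L K + gr⁻¹ ^ (p+1)) :=
        intble hg h0 (by linarith [q_pow_pos (p+1)]) (by nlinarith [q_pow_pos (p+2), q_pow_split p])
      have i2 : IntervalIntegrable g volume (L K + gr⁻¹ ^ (p+1))
          ((L K + gr⁻¹ ^ (p+1)) + gr⁻¹ ^ (p+1+1)) :=
        intble hg (by linarith [q_pow_pos (p+1)]) (by linarith [q_pow_pos (p+1+1)])
          (by rw [key]; exact hc0)
      have hadj := intervalIntegral.integral_add_adjacent_intervals i1 i2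
      have e2 : L K + gr⁻¹ ^ (p+1) + gr⁻¹ ^ (p+1+1) = L K + gr⁻¹ ^ (p + lastD K) := by
        rw [h, key]; norm_num
      rw [← e2]
      convert hadj using 3 <;> ring
    · rw [if_neg h, add_zero]
      have h1 : lastD K = 1 := by have := lastD_le K; omega
      simp only [L_snoc, lastD_snoc, Fin.val_zero, Nat.cast_zero, zero_mul, add_zero]
      rw [h1]


-- §6 evolve lemmas
lemma evolve_eq (n : ℕ) (g : ℝ → ℝ) (x : ℝ) :
    evolve n g x = if x < gr⁻¹ then ∑ J ∈ Omega n, gr⁻¹ ^ n * g (L J + x * gr⁻¹ ^ n)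
      else ∑ J ∈ (Omega n).filter (fun J => lastD J = 0),
        gr⁻¹ ^ n * g (L J + x * gr⁻¹ ^ n) := by
  unfold evolve
  rw [zpow_neg_nat]

lemma pt_mem {n : ℕ} {J : Fin n → Fin 2} (hJ : J ∈ Omega n) {x : ℝ}
    (hx0 : 0 ≤ x) (hx1 : x ≤ 1) (h : lastD J = 0 ∨ x ≤ gr⁻¹) :
    L J + x * gr⁻¹ ^ n ∈ Set.Icc (0:ℝ) 1 := by
  constructor
  · have := L_nonneg J
    have : 0 ≤ x * gr⁻¹ ^ n := mul_nonneg hx0 (le_of_lt (q_pow_pos n))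
    linarith [L_nonneg J]
  · have hc := cyl_le_one J hJ
    have hkey : x * gr⁻¹ ^ n ≤ gr⁻¹ ^ (n + lastD J) := by
      rcases h with h | h
      · rw [h, Nat.add_zero]
        nlinarith [q_pow_pos n]
      · have h2 : x * gr⁻¹ ^ n ≤ gr⁻¹ ^ (n + 1) := by
          rw [pow_succ, mul_comm (gr⁻¹ ^ n)]
          exact mul_le_mul_of_nonneg_right h (le_of_lt (q_pow_pos n))
        exact le_trans h2 (q_pow_anti (by have := lastD_le J; omega))
    linarith

lemma evolve_lip_lt {g : ℝ → ℝ} {M : ℝ} (hM : 0 ≤ M)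
    (hLip : ∀ u ∈ Set.Icc (0:ℝ) 1, ∀ v ∈ Set.Icc (0:ℝ) 1, |g u - g v| ≤ M * |u - v|)
    (n : ℕ) {x y : ℝ} (hx : x ∈ Set.Ico (0:ℝ) gr⁻¹) (hy : y ∈ Set.Ico (0:ℝ) gr⁻¹) :
    |evolve n g x - evolve n g y| ≤ gr * M * gr⁻¹ ^ n * |x - y| := by
  rw [evolve_eq, evolve_eq, if_pos hx.2, if_pos hy.2, ← Finset.sum_sub_distrib]
  have hMxy : 0 ≤ M * (gr⁻¹ ^ n * |x - y|) := mul_nonneg hM (mul_nonneg (le_of_lt (q_pow_pos n)) (abs_nonneg _))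
  calc |∑ J ∈ Omega n, (gr⁻¹ ^ n * g (L J + x * gr⁻¹ ^ n) - gr⁻¹ ^ n * g (L J + y * gr⁻¹ ^ n))|
      ≤ ∑ J ∈ Omega n, |gr⁻¹ ^ n * g (L J + x * gr⁻¹ ^ n) - gr⁻¹ ^ n * g (L J + y * gr⁻¹ ^ n)| :=
        Finset.abs_sum_le_sum_abs _ _
    _ ≤ ∑ J ∈ Omega n, gr⁻¹ ^ n * (M * (gr⁻¹ ^ n * |x - y|)) := by
        refine Finset.sum_le_sum fun J hJ => ?_
        rw [← mul_sub, abs_mul, abs_of_pos (q_pow_pos n)]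
        refine mul_le_mul_of_nonneg_left ?_ (le_of_lt (q_pow_pos n))
        have hu := pt_mem hJ hx.1 (le_trans (le_of_lt hx.2) q_le_one) (Or.inr (le_of_lt hx.2))
        have hv := pt_mem hJ hy.1 (le_trans (le_of_lt hy.2) q_le_one) (Or.inr (le_of_lt hy.2))
        have := hLip _ hu _ hv
        have e : |(L J + x * gr⁻¹ ^ n) - (L J + y * gr⁻¹ ^ n)| = gr⁻¹ ^ n * |x - y| := by
          rw [show (L J + x * gr⁻¹ ^ n) - (L J + y * gr⁻¹ ^ n) = gr⁻¹ ^ n * (x - y) by ring,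
            abs_mul, abs_of_pos (q_pow_pos n)]
        rw [e] at this
        exact this
    _ = (∑ J ∈ Omega n, gr⁻¹ ^ n) * (M * (gr⁻¹ ^ n * |x - y|)) := by
        rw [Finset.sum_mul]
    _ ≤ gr * (M * (gr⁻¹ ^ n * |x - y|)) := mul_le_mul_of_nonneg_right (sum_qn n) hMxy
    _ = gr * M * gr⁻¹ ^ n * |x - y| := by ring

lemma evolve_lip_ge {g : ℝ → ℝ} {M : ℝ} (hM : 0 ≤ M)
    (hLip : ∀ u ∈ Set.Icc (0:ℝ) 1, ∀ v ∈ Set.Icc (0:ℝ) 1, |g u - g v| ≤ M * |u - v|)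
    (n : ℕ) {x y : ℝ} (hx : x ∈ Set.Ico gr⁻¹ (1:ℝ)) (hy : y ∈ Set.Ico gr⁻¹ (1:ℝ)) :
    |evolve n g x - evolve n g y| ≤ gr * M * gr⁻¹ ^ n * |x - y| := by
  rw [evolve_eq, evolve_eq, if_neg (not_lt.mpr hx.1), if_neg (not_lt.mpr hy.1),
    ← Finset.sum_sub_distrib]
  have hMxy : 0 ≤ M * (gr⁻¹ ^ n * |x - y|) := mul_nonneg hM (mul_nonneg (le_of_lt (q_pow_pos n)) (abs_nonneg _))
  calc |∑ J ∈ (Omega n).filter (fun J => lastD J = 0),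
        (gr⁻¹ ^ n * g (L J + x * gr⁻¹ ^ n) - gr⁻¹ ^ n * g (L J + y * gr⁻¹ ^ n))|
      ≤ ∑ J ∈ (Omega n).filter (fun J => lastD J = 0),
        |gr⁻¹ ^ n * g (L J + x * gr⁻¹ ^ n) - gr⁻¹ ^ n * g (L J + y * gr⁻¹ ^ n)| :=
        Finset.abs_sum_le_sum_abs _ _
    _ ≤ ∑ J ∈ (Omega n).filter (fun J => lastD J = 0), gr⁻¹ ^ n * (M * (gr⁻¹ ^ n * |x - y|)) := by
        refine Finset.sum_le_sum fun J hJ => ?_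
        rw [Finset.mem_filter] at hJ
        rw [← mul_sub, abs_mul, abs_of_pos (q_pow_pos n)]
        refine mul_le_mul_of_nonneg_left ?_ (le_of_lt (q_pow_pos n))
        have h0q : (0:ℝ) ≤ gr⁻¹ := q_nonneg
        have hu := pt_mem hJ.1 (le_trans h0q hx.1) (le_of_lt hx.2) (Or.inl hJ.2)
        have hv := pt_mem hJ.1 (le_trans h0q hy.1) (le_of_lt hy.2) (Or.inl hJ.2)
        have := hLip _ hu _ hv
        have e : |(L J + x * gr⁻¹ ^ n) - (L J + y * gr⁻¹ ^ n)| = gr⁻¹ ^ n * |x - y| := by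
          rw [show (L J + x * gr⁻¹ ^ n) - (L J + y * gr⁻¹ ^ n) = gr⁻¹ ^ n * (x - y) by ring,
            abs_mul, abs_of_pos (q_pow_pos n)]
        rw [e] at this
        exact this
    _ = (∑ J ∈ (Omega n).filter (fun J => lastD J = 0), gr⁻¹ ^ n) * (M * (gr⁻¹ ^ n * |x - y|)) := by
        rw [Finset.sum_mul]
    _ ≤ gr * (M * (gr⁻¹ ^ n * |x - y|)) := by
        refine mul_le_mul_of_nonneg_right (le_trans ?_ (sum_qn n)) hMxy
        refine Finset.sum_le_sum_of_subset_of_nonneg (Finset.filter_subset _ _) ?_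
        intro J _ _
        exact le_of_lt (q_pow_pos n)
    _ = gr * M * gr⁻¹ ^ n * |x - y| := by ring

lemma evolve_bound {g : ℝ → ℝ} {M : ℝ}
    (hB : ∀ u ∈ Set.Icc (0:ℝ) 1, |g u| ≤ M + 1)
    (n : ℕ) {x : ℝ} (hx : x ∈ Set.Ico (0:ℝ) 1) :
    |evolve n g x| ≤ gr * (M + 1) := by
  have hM1 : 0 ≤ M + 1 := le_trans (abs_nonneg _) (hB 0 (by norm_num))
  rw [evolve_eq]
  split
  · next hlt =>
    calc |∑ J ∈ Omega n, gr⁻¹ ^ n * g (L J + x * gr⁻¹ ^ n)|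
        ≤ ∑ J ∈ Omega n, |gr⁻¹ ^ n * g (L J + x * gr⁻¹ ^ n)| := Finset.abs_sum_le_sum_abs _ _
      _ ≤ ∑ J ∈ Omega n, gr⁻¹ ^ n * (M + 1) := by
          refine Finset.sum_le_sum fun J hJ => ?_
          rw [abs_mul, abs_of_pos (q_pow_pos n)]
          exact mul_le_mul_of_nonneg_left
            (hB _ (pt_mem hJ hx.1 (le_of_lt hx.2) (Or.inr (le_of_lt hlt))))
            (le_of_lt (q_pow_pos n))
      _ = (∑ J ∈ Omega n, gr⁻¹ ^ n) * (M + 1) := by rw [Finset.sum_mul]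
      _ ≤ gr * (M + 1) := mul_le_mul_of_nonneg_right (sum_qn n) hM1
  · next hlt =>
    calc |∑ J ∈ (Omega n).filter (fun J => lastD J = 0), gr⁻¹ ^ n * g (L J + x * gr⁻¹ ^ n)|
        ≤ ∑ J ∈ (Omega n).filter (fun J => lastD J = 0), |gr⁻¹ ^ n * g (L J + x * gr⁻¹ ^ n)| :=
          Finset.abs_sum_le_sum_abs _ _
      _ ≤ ∑ J ∈ (Omega n).filter (fun J => lastD J = 0), gr⁻¹ ^ n * (M + 1) := by
          refine Finset.sum_le_sum fun J hJ => ?_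
          rw [Finset.mem_filter] at hJ
          rw [abs_mul, abs_of_pos (q_pow_pos n)]
          exact mul_le_mul_of_nonneg_left
            (hB _ (pt_mem hJ.1 hx.1 (le_of_lt hx.2) (Or.inl hJ.2)))
            (le_of_lt (q_pow_pos n))
      _ = (∑ J ∈ (Omega n).filter (fun J => lastD J = 0), gr⁻¹ ^ n) * (M + 1) := by
          rw [Finset.sum_mul]
      _ ≤ gr * (M + 1) := by
          refine mul_le_mul_of_nonneg_right (le_trans ?_ (sum_qn n)) hM1
          refine Finset.sum_le_sum_of_subset_of_nonneg (Finset.filter_subset _ _) ?_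
          intro J _ _
          exact le_of_lt (q_pow_pos n)

-- §7 recursions
lemma q_mem_Ico : gr⁻¹ ∈ Set.Ico (0:ℝ) 1 := ⟨q_nonneg, q_lt_one⟩

lemma evolve_zero_succ (g : ℝ → ℝ) (k : ℕ) :
    evolve (k+1) g 0 = gr⁻¹ * (evolve k g 0 + evolve k g gr⁻¹) := by
  rw [evolve_eq, evolve_eq, evolve_eq, if_pos q_pos, if_pos q_pos, if_neg (lt_irrefl gr⁻¹)]
  rw [sum_omega_succ (fun J => gr⁻¹ ^ (k+1) * g (L J + 0 * gr⁻¹ ^ (k+1)))]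
  rw [Finset.sum_filter, mul_add, Finset.mul_sum, Finset.mul_sum, ← Finset.sum_add_distrib]
  refine Finset.sum_congr rfl fun K _ => ?_
  simp only [L_snoc, Fin.val_zero, Fin.val_one, Nat.cast_zero, Nat.cast_one, zero_mul, one_mul,
    add_zero]
  have e1 : L K + gr⁻¹ * gr⁻¹ ^ k = L K + gr⁻¹ ^ (k+1) := by rw [pow_succ]; ring
  rw [e1]
  by_cases h : lastD K = 0
  · rw [if_pos h, if_pos h, pow_succ]
    ring
  · rw [if_neg h, if_neg h, pow_succ]
    ring

lemma evolve_inv_succ (g : ℝ → ℝ) (k : ℕ) :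
    evolve (k+1) g gr⁻¹ = gr⁻¹ * evolve k g (gr⁻¹ ^ 2) := by
  have hq2 : gr⁻¹ ^ 2 < gr⁻¹ := by nlinarith [q_pos, q_lt_one]
  rw [evolve_eq, evolve_eq, if_neg (lt_irrefl gr⁻¹), if_pos hq2]
  rw [sum_omega_succ_filter (fun J => gr⁻¹ ^ (k+1) * g (L J + gr⁻¹ * gr⁻¹ ^ (k+1)))]
  rw [Finset.mul_sum]
  refine Finset.sum_congr rfl fun K _ => ?_
  simp only [L_snoc, Fin.val_zero, Nat.cast_zero, zero_mul, add_zero]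
  have e1 : L K + gr⁻¹ * gr⁻¹ ^ (k+1) = L K + gr⁻¹ ^ 2 * gr⁻¹ ^ k := by
    rw [← pow_succ']
    ring_nf
  rw [e1, pow_succ]
  ring

lemma recG {g : ℝ → ℝ} {M : ℝ} (hM : 0 ≤ M)
    (hLip : ∀ u ∈ Set.Icc (0:ℝ) 1, ∀ v ∈ Set.Icc (0:ℝ) 1, |g u - g v| ≤ M * |u - v|) (k : ℕ) :
    |evolve (k+1) g gr⁻¹ - gr⁻¹ * evolve k g 0| ≤ M * gr⁻¹ ^ (k+2) := by
  rw [evolve_inv_succ, ← mul_sub, abs_mul, abs_of_pos q_pos]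
  have hq2 : gr⁻¹ ^ 2 ∈ Set.Ico (0:ℝ) gr⁻¹ :=
    ⟨le_of_lt (pow_pos q_pos 2), by nlinarith [q_pos, q_lt_one]⟩
  have h0 : (0:ℝ) ∈ Set.Ico (0:ℝ) gr⁻¹ := ⟨le_refl 0, q_pos⟩
  have := evolve_lip_lt hM hLip k hq2 h0
  have e : |gr⁻¹ ^ 2 - 0| = gr⁻¹ ^ 2 := by
    rw [sub_zero, abs_of_pos (pow_pos q_pos 2)]
  rw [e] at this
  calc gr⁻¹ * |evolve k g (gr⁻¹ ^ 2) - evolve k g 0|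
      ≤ gr⁻¹ * (gr * M * gr⁻¹ ^ k * gr⁻¹ ^ 2) := mul_le_mul_of_nonneg_left this q_nonneg
    _ = (gr⁻¹ * gr) * (M * (gr⁻¹ ^ k * gr⁻¹ ^ 2)) := by ring
    _ = M * gr⁻¹ ^ (k+2) := by
        rw [inv_mul_cancel₀ gr_ne, one_mul, ← pow_add]

noncomputable def Sa (g : ℝ → ℝ) (k : ℕ) : ℝ := evolve k g 0 + gr⁻¹ * evolve k g gr⁻¹
noncomputable def Ta (g : ℝ → ℝ) (k : ℕ) : ℝ := evolve k g 0 - gr * evolve k g gr⁻¹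

lemma recS {g : ℝ → ℝ} {M : ℝ} (hM : 0 ≤ M)
    (hLip : ∀ u ∈ Set.Icc (0:ℝ) 1, ∀ v ∈ Set.Icc (0:ℝ) 1, |g u - g v| ≤ M * |u - v|) (k : ℕ) :
    |Sa g (k+1) - Sa g k| ≤ M * gr⁻¹ ^ (k+3) := by
  have e : Sa g (k+1) - Sa g k
      = gr⁻¹ * (evolve (k+1) g gr⁻¹ - gr⁻¹ * evolve k g 0) := by
    unfold Sa
    rw [evolve_zero_succ]
    linear_combination (evolve k g 0) * q_sum
  rw [e, abs_mul, abs_of_pos q_pos]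
  calc gr⁻¹ * |evolve (k+1) g gr⁻¹ - gr⁻¹ * evolve k g 0|
      ≤ gr⁻¹ * (M * gr⁻¹ ^ (k+2)) := mul_le_mul_of_nonneg_left (recG hM hLip k) q_nonneg
    _ = M * gr⁻¹ ^ (k+3) := by rw [pow_succ]; ring

lemma recT {g : ℝ → ℝ} {M : ℝ} (hM : 0 ≤ M)
    (hLip : ∀ u ∈ Set.Icc (0:ℝ) 1, ∀ v ∈ Set.Icc (0:ℝ) 1, |g u - g v| ≤ M * |u - v|) (k : ℕ) :
    |Ta g (k+1) + gr⁻¹ ^ 2 * Ta g k| ≤ M * gr⁻¹ ^ (k+1) := by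
  have e : Ta g (k+1) + gr⁻¹ ^ 2 * Ta g k
      = -gr * (evolve (k+1) g gr⁻¹ - gr⁻¹ * evolve k g 0) := by
    unfold Ta
    rw [evolve_zero_succ]
    have hq : gr * gr⁻¹ = 1 := gr_mul_q
    linear_combination (evolve k g 0) * q_sum + (-(gr⁻¹) * (evolve k g gr⁻¹) - evolve k g 0) * hq
  rw [e, abs_mul, abs_neg, abs_of_pos gr_pos]
  calc gr * |evolve (k+1) g gr⁻¹ - gr⁻¹ * evolve k g 0|
      ≤ gr * (M * gr⁻¹ ^ (k+2)) := mul_le_mul_of_nonneg_left (recG hM hLip k) (le_of_lt gr_pos)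
    _ = M * (gr⁻¹ ^ (k+1) * (gr * gr⁻¹)) := by rw [pow_succ]; ring
    _ = M * gr⁻¹ ^ (k+1) := by rw [gr_mul_q, mul_one]

lemma Sbound {g : ℝ → ℝ} {M : ℝ} (hM : 0 ≤ M)
    (hLip : ∀ u ∈ Set.Icc (0:ℝ) 1, ∀ v ∈ Set.Icc (0:ℝ) 1, |g u - g v| ≤ M * |u - v|)
    (m : ℕ) : ∀ j : ℕ, |Sa g (m+j) - Sa g m| ≤ M * gr⁻¹ ^ (m+1) * (1 - gr⁻¹ ^ j) := by
  intro j
  induction j with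
  | zero => simp
  | succ j ih =>
    have h1 := recS hM hLip (m+j)
    have e : Sa g (m+(j+1)) - Sa g m = (Sa g (m+j+1) - Sa g (m+j)) + (Sa g (m+j) - Sa g m) := by
      have : m + (j+1) = m + j + 1 := rfl
      rw [this]; ring
    rw [e]
    have tri := abs_add_le (Sa g (m+j+1) - Sa g (m+j)) (Sa g (m+j) - Sa g m)
    have epow : M * gr⁻¹ ^ (m+j+3) = M * gr⁻¹ ^ (m+1) * gr⁻¹ ^ (j+2) := by
      rw [mul_assoc, ← pow_add]; congr 2; omega
    have key : M * gr⁻¹ ^ (m+1) * (1 - gr⁻¹ ^ j) + M * gr⁻¹ ^ (m+j+3)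
        = M * gr⁻¹ ^ (m+1) * (1 - gr⁻¹ ^ (j+1)) := by
      rw [epow]
      linear_combination (M * gr⁻¹ ^ (m+1)) * q_pow_split j
    linarith [tri, h1, ih]

lemma Tbound {g : ℝ → ℝ} {M : ℝ} (hM : 0 ≤ M)
    (hLip : ∀ u ∈ Set.Icc (0:ℝ) 1, ∀ v ∈ Set.Icc (0:ℝ) 1, |g u - g v| ≤ M * |u - v|)
    (m : ℕ) : ∀ j : ℕ, |Ta g (m+j)| ≤ gr⁻¹ ^ (2*j) * |Ta g m| + 3 * M * gr⁻¹ ^ (m+j) := by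
  intro j
  induction j with
  | zero =>
    simp only [Nat.add_zero, Nat.mul_zero, pow_zero, one_mul]
    have h3 : 0 ≤ 3 * M * gr⁻¹ ^ m := by
      have := q_pow_pos m
      nlinarith
    linarith
  | succ j ih =>
    have h1 := recT hM hLip (m+j)
    have tri : |Ta g (m+(j+1))| ≤ |Ta g (m+j+1) + gr⁻¹ ^ 2 * Ta g (m+j)| + gr⁻¹ ^ 2 * |Ta g (m+j)| := by
      have e : Ta g (m+(j+1)) = (Ta g (m+j+1) + gr⁻¹ ^ 2 * Ta g (m+j)) - gr⁻¹ ^ 2 * Ta g (m+j) := by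
        have : m + (j+1) = m + j + 1 := rfl
        rw [this]; ring
      rw [e]
      calc |(Ta g (m+j+1) + gr⁻¹ ^ 2 * Ta g (m+j)) - gr⁻¹ ^ 2 * Ta g (m+j)|
          ≤ |Ta g (m+j+1) + gr⁻¹ ^ 2 * Ta g (m+j)| + |gr⁻¹ ^ 2 * Ta g (m+j)| := abs_sub _ _
        _ = |Ta g (m+j+1) + gr⁻¹ ^ 2 * Ta g (m+j)| + gr⁻¹ ^ 2 * |Ta g (m+j)| := by
            rw [abs_mul, abs_of_pos (pow_pos q_pos 2)]
    have h2 : gr⁻¹ ^ 2 * |Ta g (m+j)|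
        ≤ gr⁻¹ ^ 2 * (gr⁻¹ ^ (2*j) * |Ta g m| + 3 * M * gr⁻¹ ^ (m+j)) :=
      mul_le_mul_of_nonneg_left ih (le_of_lt (pow_pos q_pos 2))
    have e1 : gr⁻¹ ^ 2 * (gr⁻¹ ^ (2*j) * |Ta g m|) = gr⁻¹ ^ (2*(j+1)) * |Ta g m| := by
      rw [← mul_assoc, ← pow_add]; congr 2; omega
    have e2 : gr⁻¹ ^ (m+(j+1)) = gr⁻¹ ^ (m+j) * gr⁻¹ := by rw [← pow_succ]; rfl
    have e3 : gr⁻¹ ^ (m+j+1) = gr⁻¹ ^ (m+j) * gr⁻¹ := by rw [← pow_succ]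
    have hqq : gr⁻¹ ^ 2 * (3 * M * gr⁻¹ ^ (m+j)) + M * gr⁻¹ ^ (m+j+1)
        ≤ 3 * M * gr⁻¹ ^ (m+(j+1)) := by
      rw [e2, e3]
      have hx : 0 ≤ M * gr⁻¹ ^ (m+j) := mul_nonneg hM (le_of_lt (q_pow_pos (m+j)))
      have h23 : gr⁻¹ < 2/3 := q_lt_23
      nlinarith [q_pos, mul_nonneg hx (le_of_lt q_pos)]
    calc |Ta g (m+(j+1))|
        ≤ |Ta g (m+j+1) + gr⁻¹ ^ 2 * Ta g (m+j)| + gr⁻¹ ^ 2 * |Ta g (m+j)| := tri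
      _ ≤ M * gr⁻¹ ^ (m+j+1) + gr⁻¹ ^ 2 * (gr⁻¹ ^ (2*j) * |Ta g m| + 3 * M * gr⁻¹ ^ (m+j)) := by
          linarith [h1, h2]
      _ ≤ gr⁻¹ ^ (2*(j+1)) * |Ta g m| + 3 * M * gr⁻¹ ^ (m+(j+1)) := by
          rw [mul_add, e1]
          linarith [hqq]


-- §8 mass
lemma riemann {g : ℝ → ℝ} {M : ℝ} (hg : ContinuousOn g (Set.Icc 0 1)) (hM : 0 ≤ M)
    (hLip : ∀ u ∈ Set.Icc (0:ℝ) 1, ∀ v ∈ Set.Icc (0:ℝ) 1, |g u - g v| ≤ M * |u - v|)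
    {a h : ℝ} (h0 : 0 ≤ a) (hh : 0 ≤ h) (h1 : a + h ≤ 1) :
    |h * g a - ∫ x in a..(a+h), g x| ≤ M * h ^ 2 := by
  have hi : IntervalIntegrable g volume a (a+h) := intble hg h0 (by linarith) h1
  have hic : IntervalIntegrable (fun _ => g a) volume a (a+h) := intervalIntegrable_const
  have hconst : ∫ _x in a..(a+h), g a = h * g a := by
    rw [intervalIntegral.integral_const]
    simp
  have e : h * g a - ∫ x in a..(a+h), g x = ∫ x in a..(a+h), (g a - g x) := by
    rw [intervalIntegral.integral_sub hic hi, hconst]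
  rw [e]
  have hb : ∀ x ∈ Set.uIoc a (a+h), ‖g a - g x‖ ≤ M * h := by
    intro x hx
    rw [Set.uIoc_of_le (by linarith : a ≤ a + h)] at hx
    have hxm : x ∈ Set.Icc (0:ℝ) 1 := ⟨by linarith [hx.1], by linarith [hx.2]⟩
    have ham : a ∈ Set.Icc (0:ℝ) 1 := ⟨h0, by linarith⟩
    have := hLip a ham x hxm
    have habs : |a - x| ≤ h := by
      rw [abs_sub_comm, abs_of_pos (by linarith [hx.1] : 0 < x - a)]
      linarith [hx.2]
    calc ‖g a - g x‖ = |g a - g x| := rfl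
      _ ≤ M * |a - x| := this
      _ ≤ M * h := mul_le_mul_of_nonneg_left habs hM
  have := intervalIntegral.norm_integral_le_of_norm_le_const hb
  have e2 : |a + h - a| = h := by rw [show a + h - a = h by ring, abs_of_nonneg hh]
  rw [e2] at this
  calc |∫ x in a..(a+h), (g a - g x)| ≤ M * h * h := this
    _ = M * h ^ 2 := by ring

lemma mass {g : ℝ → ℝ} {M : ℝ} (hg : ContinuousOn g (Set.Icc 0 1)) (hM : 0 ≤ M)
    (hLip : ∀ u ∈ Set.Icc (0:ℝ) 1, ∀ v ∈ Set.Icc (0:ℝ) 1, |g u - g v| ≤ M * |u - v|)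
    (hint : (∫ x in Set.Ico (0:ℝ) 1, g x) = 1) (m : ℕ) :
    |∑ J ∈ Omega m, gr⁻¹ ^ (m + lastD J) * g (L J) - 1| ≤ M * gr⁻¹ ^ m := by
  have h01 : (∫ x in (0:ℝ)..1, g x) = 1 := by
    rw [intervalIntegral.integral_of_le zero_le_one, integral_Ioc_eq_integral_Ioo,
      ← integral_Ico_eq_integral_Ioo]
    exact hint
  rw [← h01, ← sum_integral hg m, ← Finset.sum_sub_distrib]
  calc |∑ J ∈ Omega m, (gr⁻¹ ^ (m + lastD J) * g (L J)
          - ∫ x in (L J)..(L J + gr⁻¹ ^ (m + lastD J)), g x)|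
      ≤ ∑ J ∈ Omega m, |gr⁻¹ ^ (m + lastD J) * g (L J)
          - ∫ x in (L J)..(L J + gr⁻¹ ^ (m + lastD J)), g x| := Finset.abs_sum_le_sum_abs _ _
    _ ≤ ∑ J ∈ Omega m, (M * gr⁻¹ ^ m) * gr⁻¹ ^ (m + lastD J) := by
        refine Finset.sum_le_sum fun J hJ => ?_
        have hr := riemann hg hM hLip (L_nonneg J) (le_of_lt (q_pow_pos (m + lastD J)))
          (cyl_le_one J hJ)
        calc |gr⁻¹ ^ (m + lastD J) * g (L J)
              - ∫ x in (L J)..(L J + gr⁻¹ ^ (m + lastD J)), g x|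
            ≤ M * (gr⁻¹ ^ (m + lastD J)) ^ 2 := hr
          _ ≤ (M * gr⁻¹ ^ m) * gr⁻¹ ^ (m + lastD J) := by
              have hle : gr⁻¹ ^ (m + lastD J) ≤ gr⁻¹ ^ m := q_pow_anti (Nat.le_add_right m _)
              have hp := q_pow_pos (m + lastD J)
              nlinarith [mul_le_mul_of_nonneg_right (mul_le_mul_of_nonneg_left hle hM) (le_of_lt hp)]
    _ = (M * gr⁻¹ ^ m) * ∑ J ∈ Omega m, gr⁻¹ ^ (m + lastD J) := by rw [Finset.mul_sum]
    _ = M * gr⁻¹ ^ m := by rw [sum_len m, mul_one]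

lemma regroup {g : ℝ → ℝ} {M : ℝ} (hM : 0 ≤ M)
    (hLip : ∀ u ∈ Set.Icc (0:ℝ) 1, ∀ v ∈ Set.Icc (0:ℝ) 1, |g u - g v| ≤ M * |u - v|) (m : ℕ) :
    |gr⁻¹ * evolve m g 0 + gr⁻¹ ^ 2 * evolve m g gr⁻¹
      - ∑ J ∈ Omega m, gr⁻¹ ^ (m + lastD J) * g (L J)| ≤ M * gr⁻¹ ^ m := by
  rw [evolve_eq, evolve_eq, if_pos q_pos, if_neg (lt_irrefl gr⁻¹), Finset.sum_filter,
    Finset.mul_sum, Finset.mul_sum, ← Finset.sum_add_distrib, ← Finset.sum_sub_distrib]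
  have hptJ : ∀ J ∈ Omega m, |gr⁻¹ * (gr⁻¹ ^ m * g (L J + 0 * gr⁻¹ ^ m))
      + gr⁻¹ ^ 2 * (if lastD J = 0 then gr⁻¹ ^ m * g (L J + gr⁻¹ * gr⁻¹ ^ m) else 0)
      - gr⁻¹ ^ (m + lastD J) * g (L J)| ≤ (M * gr⁻¹ ^ (m+3)) * gr⁻¹ ^ m := by
    intro J hJ
    have hLJ : L J ∈ Set.Icc (0:ℝ) 1 := by
      constructor
      · exact L_nonneg J
      · have := cyl_le_one J hJ
        have := q_pow_pos (m + lastD J)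
        linarith
    by_cases h : lastD J = 0
    · rw [if_pos h, h]
      have hpt : L J + gr⁻¹ ^ (m+1) ∈ Set.Icc (0:ℝ) 1 := by
        constructor
        · have := L_nonneg J
          have := q_pow_pos (m+1)
          linarith
        · have hc := cyl_le_one J hJ
          rw [h] at hc
          have : gr⁻¹ ^ (m+1) ≤ gr⁻¹ ^ (m+0) := q_pow_anti (by omega)
          simp only [Nat.add_zero] at this hc
          linarith
      have e : gr⁻¹ * (gr⁻¹ ^ m * g (L J + 0 * gr⁻¹ ^ m))
          + gr⁻¹ ^ 2 * (gr⁻¹ ^ m * g (L J + gr⁻¹ * gr⁻¹ ^ m))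
          - gr⁻¹ ^ (m + 0) * g (L J)
          = gr⁻¹ ^ (m+2) * (g (L J + gr⁻¹ ^ (m+1)) - g (L J)) := by
        have e0 : L J + 0 * gr⁻¹ ^ m = L J := by ring
        have e1 : L J + gr⁻¹ * gr⁻¹ ^ m = L J + gr⁻¹ ^ (m+1) := by rw [pow_succ]; ring
        rw [e0, e1]
        simp only [Nat.add_zero]
        linear_combination (g (L J)) * q_pow_split m
      rw [e, abs_mul, abs_of_pos (q_pow_pos (m+2))]
      have hlip := hLip _ hpt _ hLJ
      have eabs : |(L J + gr⁻¹ ^ (m+1)) - L J| = gr⁻¹ ^ (m+1) := by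
        rw [show (L J + gr⁻¹ ^ (m+1)) - L J = gr⁻¹ ^ (m+1) by ring,
          abs_of_pos (q_pow_pos (m+1))]
      rw [eabs] at hlip
      calc gr⁻¹ ^ (m+2) * |g (L J + gr⁻¹ ^ (m+1)) - g (L J)|
          ≤ gr⁻¹ ^ (m+2) * (M * gr⁻¹ ^ (m+1)) :=
            mul_le_mul_of_nonneg_left hlip (le_of_lt (q_pow_pos (m+2)))
        _ = (M * gr⁻¹ ^ (m+3)) * gr⁻¹ ^ m := by
            have epow : gr⁻¹ ^ (m+2) * gr⁻¹ ^ (m+1) = gr⁻¹ ^ (m+3) * gr⁻¹ ^ m := by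
              rw [← pow_add, ← pow_add]
              congr 1
              omega
            linear_combination M * epow
    · have h1 : lastD J = 1 := by have := lastD_le J; omega
      rw [if_neg h, h1, mul_zero, add_zero]
      have e : gr⁻¹ * (gr⁻¹ ^ m * g (L J + 0 * gr⁻¹ ^ m)) - gr⁻¹ ^ (m+1) * g (L J) = 0 := by
        have e0 : L J + 0 * gr⁻¹ ^ m = L J := by ring
        rw [e0, pow_succ]
        ring
      rw [e, abs_zero]
      have := q_pow_pos (m+3+m)
      have : 0 ≤ (M * gr⁻¹ ^ (m+3)) * gr⁻¹ ^ m :=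
        mul_nonneg (mul_nonneg hM (le_of_lt (q_pow_pos (m+3)))) (le_of_lt (q_pow_pos m))
      linarith
  calc |∑ J ∈ Omega m, (gr⁻¹ * (gr⁻¹ ^ m * g (L J + 0 * gr⁻¹ ^ m))
        + gr⁻¹ ^ 2 * (if lastD J = 0 then gr⁻¹ ^ m * g (L J + gr⁻¹ * gr⁻¹ ^ m) else 0)
        - gr⁻¹ ^ (m + lastD J) * g (L J))|
      ≤ ∑ J ∈ Omega m, |gr⁻¹ * (gr⁻¹ ^ m * g (L J + 0 * gr⁻¹ ^ m))
        + gr⁻¹ ^ 2 * (if lastD J = 0 then gr⁻¹ ^ m * g (L J + gr⁻¹ * gr⁻¹ ^ m) else 0)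
        - gr⁻¹ ^ (m + lastD J) * g (L J)| := Finset.abs_sum_le_sum_abs _ _
    _ ≤ ∑ J ∈ Omega m, (M * gr⁻¹ ^ (m+3)) * gr⁻¹ ^ m := Finset.sum_le_sum hptJ
    _ = (M * gr⁻¹ ^ (m+3)) * ∑ J ∈ Omega m, gr⁻¹ ^ m := by rw [Finset.mul_sum]
    _ ≤ (M * gr⁻¹ ^ (m+3)) * gr := by
        refine mul_le_mul_of_nonneg_left (sum_qn m) ?_
        exact mul_nonneg hM (le_of_lt (q_pow_pos (m+3)))
    _ ≤ M * gr⁻¹ ^ m := by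
        have e : gr⁻¹ ^ (m+3) * gr = gr⁻¹ ^ (m+2) := by
          rw [pow_succ]
          rw [mul_assoc, inv_mul_cancel₀ gr_ne, mul_one]
        rw [mul_assoc, e]
        have : gr⁻¹ ^ (m+2) ≤ gr⁻¹ ^ m := q_pow_anti (by omega)
        nlinarith [q_pow_pos (m+2), q_pow_pos m]

-- §9 main
set_option maxHeartbeats 2000000 in
theorem evolve_sup_bound :
    ∃ C : ℝ, 0 < C ∧ ∀ (g g' : ℝ → ℝ) (M : ℝ),
      (∀ x ∈ Set.Ico (0 : ℝ) 1, 0 ≤ g x) →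
      (∫ x in Set.Ico (0 : ℝ) 1, g x) = 1 →
      ContinuousOn g (Set.Icc (0 : ℝ) 1) →
      (∀ x ∈ Set.Ioo (0 : ℝ) 1, HasDerivAt g (g' x) x) →
      (∀ x ∈ Set.Ioo (0 : ℝ) 1, |g' x| ≤ M) →
      ∀ n : ℕ, ∀ x ∈ Set.Ico (0 : ℝ) 1,
        |evolve n g x - fGold x| ≤ C * gr ^ (-(2 * (n : ℝ)) / 3) * (M + 1) := by
  refine ⟨32, by norm_num, ?_⟩
  intro g g' M h0 hint hcont hderiv hMb n x hx
  have hM0 : 0 ≤ M := le_trans (abs_nonneg _) (hMb (1/2) ⟨by norm_num, by norm_num⟩)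
  have hM1 : (0:ℝ) ≤ M + 1 := by linarith
  -- Lipschitz bound from the derivative
  have hLip : ∀ u ∈ Set.Icc (0:ℝ) 1, ∀ v ∈ Set.Icc (0:ℝ) 1, |g u - g v| ≤ M * |u - v| := by
    have key : ∀ u v : ℝ, u ∈ Set.Icc (0:ℝ) 1 → v ∈ Set.Icc (0:ℝ) 1 → u < v →
        |g u - g v| ≤ M * |u - v| := by
      intro u v hu hv huv
      have hcont' : ContinuousOn g (Set.Icc u v) := hcont.mono (Set.Icc_subset_Icc hu.1 hv.2)
      have hder : ∀ y ∈ Set.Ioo u v, HasDerivAt g (g' y) y := fun y hy =>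
        hderiv y ⟨lt_of_le_of_lt hu.1 hy.1, lt_of_lt_of_le hy.2 hv.2⟩
      obtain ⟨c, hc, hceq⟩ := exists_hasDerivAt_eq_slope g g' huv hcont' hder
      have hcM := hMb c ⟨lt_of_le_of_lt hu.1 hc.1, lt_of_lt_of_le hc.2 hv.2⟩
      have hvu : v - u ≠ 0 := ne_of_gt (by linarith)
      have he : g v - g u = g' c * (v - u) := by
        rw [hceq]
        field_simp
      have e1 : |g u - g v| = |g' c| * |v - u| := by
        rw [abs_sub_comm, he, abs_mul]
      rw [e1, abs_sub_comm u v]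
      exact mul_le_mul_of_nonneg_right hcM (abs_nonneg _)
    intro u hu v hv
    rcases lt_trichotomy u v with h | h | h
    · exact key u v hu hv h
    · rw [h]; simp
    · rw [abs_sub_comm (g u), abs_sub_comm u v]
      exact key v u hv hu h
  -- sup bound on g
  have hx0ex : ∃ x0 ∈ Set.Icc (0:ℝ) 1, g x0 ≤ 1 := by
    obtain ⟨x0, hx0m, hmin⟩ :=
      isCompact_Icc.exists_isMinOn ⟨(0:ℝ), by norm_num⟩ hcont
    refine ⟨x0, hx0m, ?_⟩
    by_contra hgt
    push_neg at hgt
    have hci : IntegrableOn g (Set.Ico (0:ℝ) 1) volume :=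
      (hcont.integrableOn_compact isCompact_Icc).mono_set Set.Ico_subset_Icc_self
    have hvolne : volume (Set.Ico (0:ℝ) 1) ≠ ⊤ := by
      rw [Real.volume_Ico]
      exact ENNReal.ofReal_ne_top
    have hige : ∀ y ∈ Set.Ico (0:ℝ) 1, g x0 ≤ g y := fun y hy =>
      (isMinOn_iff.mp hmin) y ⟨hy.1, le_of_lt hy.2⟩
    have hle := setIntegral_ge_of_const_le measurableSet_Ico hvolne hige hci
    have hv1 : (volume (Set.Ico (0:ℝ) 1)).toReal = 1 := by
      rw [Real.volume_Ico]
      norm_num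
    rw [measureReal_def, hv1, hint, one_smul] at hle
    linarith
  obtain ⟨x0, hx0m, hx0le⟩ := hx0ex
  have hB : ∀ u ∈ Set.Icc (0:ℝ) 1, |g u| ≤ M + 1 := by
    intro u hu
    have habs1 : |u - x0| ≤ 1 := by
      rw [abs_le]
      constructor <;> [linarith [hu.1, hx0m.2]; linarith [hu.2, hx0m.1]]
    have hup : |g u - g x0| ≤ M := by
      calc |g u - g x0| ≤ M * |u - x0| := hLip u hu x0 hx0m
        _ ≤ M * 1 := mul_le_mul_of_nonneg_left habs1 hM0
        _ = M := mul_one M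
    rw [abs_le]
    constructor
    · by_cases hu1 : u < 1
      · have := h0 u ⟨hu.1, hu1⟩
        linarith
      · have hue : u = 1 := le_antisymm hu.2 (not_lt.mp hu1)
        have hhalf : (1/2 : ℝ) ∈ Set.Icc (0:ℝ) 1 := ⟨by norm_num, by norm_num⟩
        have hl := hLip u hu (1/2) hhalf
        have habs2 : |u - 1/2| ≤ 1 := by rw [hue]; rw [abs_le]; constructor <;> norm_num
        have hl2 : |g u - g (1/2)| ≤ M := by
          calc |g u - g (1/2)| ≤ M * |u - 1/2| := hl
            _ ≤ M * 1 := mul_le_mul_of_nonneg_left habs2 hM0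
            _ = M := mul_one M
        have hpos := h0 (1/2) ⟨by norm_num, by norm_num⟩
        have := abs_le.mp hl2
        linarith [this.1]
    · have := abs_le.mp hup
      linarith [this.2]
  -- setup
  set m := n - n / 3 with hm
  set l := n / 3 with hl
  have hml : m + l = n := by omega
  have hmn : m ≤ n := by omega
  -- S and T estimates
  have hreg := regroup hM0 hLip m
  have hmass := mass hcont hM0 hLip hint m
  have h2 : |gr⁻¹ * evolve m g 0 + gr⁻¹ ^ 2 * evolve m g gr⁻¹ - 1| ≤ 2 * M * gr⁻¹ ^ m := by
    have tri := abs_add_le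
      (gr⁻¹ * evolve m g 0 + gr⁻¹ ^ 2 * evolve m g gr⁻¹
        - ∑ J ∈ Omega m, gr⁻¹ ^ (m + lastD J) * g (L J))
      ((∑ J ∈ Omega m, gr⁻¹ ^ (m + lastD J) * g (L J)) - 1)
    have e : gr⁻¹ * evolve m g 0 + gr⁻¹ ^ 2 * evolve m g gr⁻¹ - 1
        = (gr⁻¹ * evolve m g 0 + gr⁻¹ ^ 2 * evolve m g gr⁻¹
          - ∑ J ∈ Omega m, gr⁻¹ ^ (m + lastD J) * g (L J))
          + ((∑ J ∈ Omega m, gr⁻¹ ^ (m + lastD J) * g (L J)) - 1) := by ring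
    rw [e]
    linarith [tri, hreg, hmass]
  have hSm : |Sa g m - gr| ≤ 4 * M * gr⁻¹ ^ m := by
    have e : Sa g m - gr
        = gr * (gr⁻¹ * evolve m g 0 + gr⁻¹ ^ 2 * evolve m g gr⁻¹ - 1) := by
      unfold Sa
      linear_combination (-(evolve m g 0) - gr⁻¹ * evolve m g gr⁻¹) * gr_mul_q
    rw [e, abs_mul, abs_of_pos gr_pos]
    calc gr * |gr⁻¹ * evolve m g 0 + gr⁻¹ ^ 2 * evolve m g gr⁻¹ - 1|
        ≤ gr * (2 * M * gr⁻¹ ^ m) := mul_le_mul_of_nonneg_left h2 (le_of_lt gr_pos)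
      _ ≤ 4 * M * gr⁻¹ ^ m := by
          nlinarith [gr_lt_two, mul_nonneg hM0 (le_of_lt (q_pow_pos m)), gr_pos]
  have hSnm : |Sa g n - Sa g m| ≤ M * gr⁻¹ ^ m := by
    have := Sbound hM0 hLip m l
    rw [hml] at this
    have h1 : M * gr⁻¹ ^ (m+1) * (1 - gr⁻¹ ^ l) ≤ M * gr⁻¹ ^ m := by
      have hq1 : gr⁻¹ ^ (m+1) ≤ gr⁻¹ ^ m := q_pow_anti (by omega)
      have hq3 : (0:ℝ) ≤ 1 - gr⁻¹ ^ l := by linarith [q_pow_le_one l]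
      have hq4 : 1 - gr⁻¹ ^ l ≤ 1 := by linarith [q_pow_pos l]
      have s1 : M * gr⁻¹ ^ (m+1) * (1 - gr⁻¹ ^ l) ≤ M * gr⁻¹ ^ (m+1) * 1 :=
        mul_le_mul_of_nonneg_left hq4 (mul_nonneg hM0 (le_of_lt (q_pow_pos (m+1))))
      have s2 : M * gr⁻¹ ^ (m+1) ≤ M * gr⁻¹ ^ m := mul_le_mul_of_nonneg_left hq1 hM0
      linarith
    linarith
  have hSn : |Sa g n - gr| ≤ 5 * M * gr⁻¹ ^ m := by
    have tri := abs_add_le (Sa g n - Sa g m) (Sa g m - gr)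
    have e : Sa g n - gr = (Sa g n - Sa g m) + (Sa g m - gr) := by ring
    rw [e]
    linarith
  have hTm : |Ta g m| ≤ 6 * (M + 1) := by
    have hA := evolve_bound hB m (Set.mem_Ico.mpr ⟨le_refl 0, one_pos⟩)
    have hG := evolve_bound hB m q_mem_Ico
    have tri : |Ta g m| ≤ |evolve m g 0| + gr * |evolve m g gr⁻¹| := by
      unfold Ta
      calc |evolve m g 0 - gr * evolve m g gr⁻¹|
          ≤ |evolve m g 0| + |gr * evolve m g gr⁻¹| := abs_sub _ _
        _ = |evolve m g 0| + gr * |evolve m g gr⁻¹| := by rw [abs_mul, abs_of_pos gr_pos]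
    calc |Ta g m| ≤ |evolve m g 0| + gr * |evolve m g gr⁻¹| := tri
      _ ≤ gr * (M+1) + gr * (gr * (M+1)) := by
          have := mul_le_mul_of_nonneg_left hG (le_of_lt gr_pos)
          linarith [hA]
      _ ≤ 6 * (M+1) := by
          have e1 : gr * (M+1) ≤ 2 * (M+1) := mul_le_mul_of_nonneg_right (le_of_lt gr_lt_two) hM1
          have e2 : gr * (gr * (M+1)) ≤ 2 * (gr * (M+1)) :=
            mul_le_mul_of_nonneg_right (le_of_lt gr_lt_two)
              (mul_nonneg (le_of_lt gr_pos) hM1)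
          linarith
  have hTn : |Ta g n| ≤ 6 * (M+1) * gr⁻¹ ^ (2*l) + 3 * M * gr⁻¹ ^ m := by
    have := Tbound hM0 hLip m l
    rw [hml] at this
    have h1 : gr⁻¹ ^ (2*l) * |Ta g m| ≤ gr⁻¹ ^ (2*l) * (6 * (M+1)) :=
      mul_le_mul_of_nonneg_left hTm (le_of_lt (q_pow_pos (2*l)))
    have h2' : gr⁻¹ ^ n ≤ gr⁻¹ ^ m := q_pow_anti hmn
    have h3 : 3 * M * gr⁻¹ ^ n ≤ 3 * M * gr⁻¹ ^ m :=
      mul_le_mul_of_nonneg_left h2' (by linarith)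
    have h1' : gr⁻¹ ^ (2*l) * (6 * (M+1)) = 6 * (M+1) * gr⁻¹ ^ (2*l) := by ring
    linarith [this, h1, h3, h1'.le, h1'.ge]
  -- rpow conversions
  have hrpow : ∀ k : ℕ, gr⁻¹ ^ k = gr ^ (-(k:ℝ)) := by
    intro k
    rw [inv_pow, ← Real.rpow_natCast gr k, ← Real.rpow_neg (le_of_lt gr_pos)]
  have hRpos : (0:ℝ) < gr ^ (-(2 * (n:ℝ)) / 3) := Real.rpow_pos_of_pos gr_pos _
  have hr1 : gr⁻¹ ^ m ≤ gr ^ (-(2 * (n:ℝ)) / 3) := by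
    rw [hrpow m]
    apply (Real.rpow_le_rpow_left_iff gr_gt_one).mpr
    have h2n : 2 * n ≤ 3 * m := by omega
    have h2n' : (2:ℝ) * n ≤ 3 * m := by exact_mod_cast h2n
    linarith
  have hr2 : gr⁻¹ ^ (2*l) ≤ 3 * gr ^ (-(2 * (n:ℝ)) / 3) := by
    rw [hrpow (2*l)]
    have step1 : gr ^ (-((2*l : ℕ):ℝ)) ≤ gr ^ ((2:ℝ) + (-(2 * (n:ℝ)) / 3)) := by
      apply (Real.rpow_le_rpow_left_iff gr_gt_one).mpr
      have h2n : 2 * n ≤ 6 + 6 * l := by omega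
      have h2n' : (2:ℝ) * n ≤ 6 + 6 * l := by exact_mod_cast h2n
      push_cast
      linarith
    rw [Real.rpow_add gr_pos] at step1
    have e2 : gr ^ (2:ℝ) = gr ^ (2:ℕ) := by
      rw [show ((2:ℝ)) = ((2:ℕ):ℝ) by norm_num, Real.rpow_natCast]
    rw [e2, gr_sq] at step1
    calc gr ^ (-((2*l : ℕ):ℝ)) ≤ (gr + 1) * gr ^ (-(2 * (n:ℝ)) / 3) := step1
      _ ≤ 3 * gr ^ (-(2 * (n:ℝ)) / 3) := by nlinarith [gr_lt_two, hRpos]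
  -- final case split
  rcases lt_or_ge x gr⁻¹ with hxlt | hxge
  · -- x < 1/gr
    have hclose : |evolve n g x - evolve n g 0| ≤ M * gr⁻¹ ^ m := by
      have hlt := evolve_lip_lt hM0 hLip n ⟨hx.1, hxlt⟩ ⟨le_refl 0, q_pos⟩
      have e : |x - 0| ≤ gr⁻¹ := by rw [sub_zero, abs_of_nonneg hx.1]; exact le_of_lt hxlt
      have h1 : gr * M * gr⁻¹ ^ n * |x - 0| ≤ gr * M * gr⁻¹ ^ n * gr⁻¹ :=
        mul_le_mul_of_nonneg_left e
          (mul_nonneg (mul_nonneg (le_of_lt gr_pos) hM0) (le_of_lt (q_pow_pos n)))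
      have h2c : gr * M * gr⁻¹ ^ n * gr⁻¹ = M * gr⁻¹ ^ n := by
        rw [show gr * M * gr⁻¹ ^ n * gr⁻¹ = M * gr⁻¹ ^ n * (gr * gr⁻¹) by ring, gr_mul_q, mul_one]
      have h3c : M * gr⁻¹ ^ n ≤ M * gr⁻¹ ^ m := mul_le_mul_of_nonneg_left (q_pow_anti hmn) hM0
      rw [h2c] at h1
      linarith [hlt]
    have h5pos : (0:ℝ) < Real.sqrt 5 := lt_trans two_pos s5_gt
    have key : Real.sqrt 5 * evolve n g 0 - gr ^ 2 = gr * (Sa g n - gr) + gr⁻¹ * Ta g n := by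
      unfold Sa Ta
      linear_combination (-(evolve n g 0)) * gr_add_q
    have hnum : |gr * (Sa g n - gr) + gr⁻¹ * Ta g n|
        ≤ 13 * M * gr⁻¹ ^ m + 6 * (M+1) * gr⁻¹ ^ (2*l) := by
      have t1 : gr * |Sa g n - gr| ≤ gr * (5 * M * gr⁻¹ ^ m) :=
        mul_le_mul_of_nonneg_left hSn (le_of_lt gr_pos)
      have t2 : gr * (5 * M * gr⁻¹ ^ m) ≤ 2 * (5 * M * gr⁻¹ ^ m) :=
        mul_le_mul_of_nonneg_right (le_of_lt gr_lt_two)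
          (mul_nonneg (mul_nonneg (by norm_num) hM0) (le_of_lt (q_pow_pos m)))
      have t3 : gr⁻¹ * |Ta g n| ≤ 1 * |Ta g n| :=
        mul_le_mul_of_nonneg_right q_le_one (abs_nonneg _)
      calc |gr * (Sa g n - gr) + gr⁻¹ * Ta g n|
          ≤ |gr * (Sa g n - gr)| + |gr⁻¹ * Ta g n| := abs_add_le _ _
        _ = gr * |Sa g n - gr| + gr⁻¹ * |Ta g n| := by
            rw [abs_mul, abs_mul, abs_of_pos gr_pos, abs_of_pos q_pos]
        _ ≤ 13 * M * gr⁻¹ ^ m + 6 * (M+1) * gr⁻¹ ^ (2*l) := by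
            have := mul_nonneg hM0 (le_of_lt (q_pow_pos m))
            linarith [t1, t2, t3, hTn]
    have e3 : Real.sqrt 5 * (evolve n g 0 - (1+gr)/Real.sqrt 5)
        = gr * (Sa g n - gr) + gr⁻¹ * Ta g n := by
      have expand : Real.sqrt 5 * (evolve n g 0 - (1+gr)/Real.sqrt 5)
          = Real.sqrt 5 * evolve n g 0 - (1+gr) := by
        field_simp
      rw [expand, show (1:ℝ)+gr = gr^2 by linarith [gr_sq]]
      exact key
    have heA : |evolve n g 0 - (1+gr)/Real.sqrt 5|
        ≤ 7 * M * gr⁻¹ ^ m + 3 * (M+1) * gr⁻¹ ^ (2*l) := by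
      have habs : Real.sqrt 5 * |evolve n g 0 - (1+gr)/Real.sqrt 5|
          = |gr * (Sa g n - gr) + gr⁻¹ * Ta g n| := by
        rw [← e3, abs_mul, abs_of_pos h5pos]
      have h2X : 2 * |evolve n g 0 - (1+gr)/Real.sqrt 5|
          ≤ Real.sqrt 5 * |evolve n g 0 - (1+gr)/Real.sqrt 5| :=
        mul_le_mul_of_nonneg_right (le_of_lt s5_gt) (abs_nonneg _)
      have := mul_nonneg hM0 (le_of_lt (q_pow_pos m))
      linarith [habs, hnum, h2X]
    have hf : fGold x = (1+gr)/Real.sqrt 5 := if_pos hxlt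
    have tri : |evolve n g x - fGold x|
        ≤ |evolve n g x - evolve n g 0| + |evolve n g 0 - (1+gr)/Real.sqrt 5| := by
      rw [hf]
      have e : evolve n g x - (1+gr)/Real.sqrt 5
          = (evolve n g x - evolve n g 0) + (evolve n g 0 - (1+gr)/Real.sqrt 5) := by ring
      rw [e]
      exact abs_add_le _ _
    have total : |evolve n g x - fGold x|
        ≤ 8 * M * gr⁻¹ ^ m + 3 * (M+1) * gr⁻¹ ^ (2*l) := by linarith [tri, hclose, heA]
    have hb1 : M * gr⁻¹ ^ m ≤ (M+1) * gr ^ (-(2 * (n:ℝ)) / 3) := by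
      have s1 : M * gr⁻¹ ^ m ≤ (M+1) * gr⁻¹ ^ m :=
        mul_le_mul_of_nonneg_right (by linarith) (le_of_lt (q_pow_pos m))
      have s2 : (M+1) * gr⁻¹ ^ m ≤ (M+1) * gr ^ (-(2 * (n:ℝ)) / 3) :=
        mul_le_mul_of_nonneg_left hr1 hM1
      linarith
    have hb2 : (M+1) * gr⁻¹ ^ (2*l) ≤ (M+1) * (3 * gr ^ (-(2 * (n:ℝ)) / 3)) :=
      mul_le_mul_of_nonneg_left hr2 hM1
    have hcomm : (32:ℝ) * gr ^ (-(2 * (n:ℝ)) / 3) * (M + 1)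
        = 32 * ((M+1) * gr ^ (-(2 * (n:ℝ)) / 3)) := by ring
    have hprod : 0 ≤ (M+1) * gr ^ (-(2 * (n:ℝ)) / 3) := mul_nonneg hM1 (le_of_lt hRpos)
    rw [hcomm]
    linarith [total, hb1, hb2, hprod]
  · -- x ≥ 1/gr
    have hclose : |evolve n g x - evolve n g gr⁻¹| ≤ M * gr⁻¹ ^ m := by
      have hlt := evolve_lip_ge hM0 hLip n ⟨hxge, hx.2⟩ ⟨le_refl gr⁻¹, q_lt_one⟩
      have e : |x - gr⁻¹| ≤ gr⁻¹ := by
        rw [abs_of_nonneg (by linarith : (0:ℝ) ≤ x - gr⁻¹)]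
        have hq2 : 1 - gr⁻¹ = gr⁻¹ ^ 2 := by linarith [q_sum]
        have : gr⁻¹ ^ 2 ≤ gr⁻¹ := by nlinarith [q_pos, q_lt_one]
        linarith [hx.2]
      have h1 : gr * M * gr⁻¹ ^ n * |x - gr⁻¹| ≤ gr * M * gr⁻¹ ^ n * gr⁻¹ :=
        mul_le_mul_of_nonneg_left e
          (mul_nonneg (mul_nonneg (le_of_lt gr_pos) hM0) (le_of_lt (q_pow_pos n)))
      have h2c : gr * M * gr⁻¹ ^ n * gr⁻¹ = M * gr⁻¹ ^ n := by
        rw [show gr * M * gr⁻¹ ^ n * gr⁻¹ = M * gr⁻¹ ^ n * (gr * gr⁻¹) by ring, gr_mul_q, mul_one]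
      have h3c : M * gr⁻¹ ^ n ≤ M * gr⁻¹ ^ m := mul_le_mul_of_nonneg_left (q_pow_anti hmn) hM0
      rw [h2c] at h1
      linarith [hlt]
    have h5pos : (0:ℝ) < Real.sqrt 5 := lt_trans two_pos s5_gt
    have key2 : Real.sqrt 5 * evolve n g gr⁻¹ - gr = (Sa g n - gr) - Ta g n := by
      unfold Sa Ta
      linear_combination (-(evolve n g gr⁻¹)) * gr_add_q
    have hnum2 : |(Sa g n - gr) - Ta g n|
        ≤ 8 * M * gr⁻¹ ^ m + 6 * (M+1) * gr⁻¹ ^ (2*l) := by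
      calc |(Sa g n - gr) - Ta g n| ≤ |Sa g n - gr| + |Ta g n| := abs_sub _ _
        _ ≤ 8 * M * gr⁻¹ ^ m + 6 * (M+1) * gr⁻¹ ^ (2*l) := by linarith [hSn, hTn]
    have e3 : Real.sqrt 5 * (evolve n g gr⁻¹ - gr/Real.sqrt 5)
        = (Sa g n - gr) - Ta g n := by
      have expand : Real.sqrt 5 * (evolve n g gr⁻¹ - gr/Real.sqrt 5)
          = Real.sqrt 5 * evolve n g gr⁻¹ - gr := by
        field_simp
      rw [expand]
      exact key2
    have heG : |evolve n g gr⁻¹ - gr/Real.sqrt 5|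
        ≤ 4 * M * gr⁻¹ ^ m + 3 * (M+1) * gr⁻¹ ^ (2*l) := by
      have habs : Real.sqrt 5 * |evolve n g gr⁻¹ - gr/Real.sqrt 5|
          = |(Sa g n - gr) - Ta g n| := by
        rw [← e3, abs_mul, abs_of_pos h5pos]
      have h2X : 2 * |evolve n g gr⁻¹ - gr/Real.sqrt 5|
          ≤ Real.sqrt 5 * |evolve n g gr⁻¹ - gr/Real.sqrt 5| :=
        mul_le_mul_of_nonneg_right (le_of_lt s5_gt) (abs_nonneg _)
      linarith [habs, hnum2, h2X]
    have hf : fGold x = gr/Real.sqrt 5 := if_neg (not_lt.mpr hxge)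
    have tri : |evolve n g x - fGold x|
        ≤ |evolve n g x - evolve n g gr⁻¹| + |evolve n g gr⁻¹ - gr/Real.sqrt 5| := by
      rw [hf]
      have e : evolve n g x - gr/Real.sqrt 5
          = (evolve n g x - evolve n g gr⁻¹) + (evolve n g gr⁻¹ - gr/Real.sqrt 5) := by ring
      rw [e]
      exact abs_add_le _ _
    have total : |evolve n g x - fGold x|
        ≤ 5 * M * gr⁻¹ ^ m + 3 * (M+1) * gr⁻¹ ^ (2*l) := by linarith [tri, hclose, heG]
    have hb1 : M * gr⁻¹ ^ m ≤ (M+1) * gr ^ (-(2 * (n:ℝ)) / 3) := by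
      have s1 : M * gr⁻¹ ^ m ≤ (M+1) * gr⁻¹ ^ m :=
        mul_le_mul_of_nonneg_right (by linarith) (le_of_lt (q_pow_pos m))
      have s2 : (M+1) * gr⁻¹ ^ m ≤ (M+1) * gr ^ (-(2 * (n:ℝ)) / 3) :=
        mul_le_mul_of_nonneg_left hr1 hM1
      linarith
    have hb2 : (M+1) * gr⁻¹ ^ (2*l) ≤ (M+1) * (3 * gr ^ (-(2 * (n:ℝ)) / 3)) :=
      mul_le_mul_of_nonneg_left hr2 hM1
    have hcomm : (32:ℝ) * gr ^ (-(2 * (n:ℝ)) / 3) * (M + 1)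
        = 32 * ((M+1) * gr ^ (-(2 * (n:ℝ)) / 3)) := by ring
    have hprod : 0 ≤ (M+1) * gr ^ (-(2 * (n:ℝ)) / 3) := mul_nonneg hM1 (le_of_lt hRpos)
    rw [hcomm]
    linarith [total, hb1, hb2, hprod]
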